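/- (Asymptotic tangent of the feature-detection ROC curve at threshold t_p(q).) Fix 0 < β < 1, 0 < r < 1, and q > 0 with q ≠ r, and let γ₀(q;r,β) = −β − r + 2√(rq). In the ARW model, 2 · p^{−γ₀(q;r,β)} · TPR'(t_p(q)) / FPR'(t_p(q)) → 1 as p → ∞, where TPR'(t) = ε_p(φ(t−τ_p)+φ(t+τ_p)) and FPR'(t) = 2(1−ε_p)φ(t). -/

import Mathlib

open Filter Set MeasureTheory

noncomputable def gaussPDF (t : ℝ) : ℝ := (Real.sqrt (2 * Real.pi))⁻¹ * Real.exp (-(t ^ 2) / 2)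

/-- standard normal CDF Φ -/
noncomputable def normCDF (t : ℝ) : ℝ := ∫ x in Set.Iic t, gaussPDF x

/-- survival function of |N(τ,1)| -/
noncomputable def psiBar (τ t : ℝ) : ℝ := (1 - normCDF (t - τ)) + normCDF (-t - τ)

noncomputable def tprFn (ε τ t : ℝ) : ℝ := ε * psiBar τ t

noncomputable def fprFn (ε t : ℝ) : ℝ := (1 - ε) * psiBar 0 t

noncomputable def idrFn (ε τ t : ℝ) : ℝ := ε * normCDF (-t - τ)

/-- clipping proxy separation -/
noncomputable def sepFn (ε τ t : ℝ) : ℝ :=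
  2 * τ * (tprFn ε τ t - 2 * idrFn ε τ t) / Real.sqrt (tprFn ε τ t + fprFn ε t)

/-- proxy false discovery rate -/
noncomputable def fdrFn (ε τ t : ℝ) : ℝ := fprFn ε t / (tprFn ε τ t + fprFn ε t)

/-- magnitude of derivative of TPR -/
noncomputable def tprD (ε τ t : ℝ) : ℝ := ε * (gaussPDF (t - τ) + gaussPDF (t + τ))

/-- magnitude of derivative of FPR -/
noncomputable def fprD (ε t : ℝ) : ℝ := 2 * (1 - ε) * gaussPDF t

/-- proxy local false discovery rate -/
noncomputable def lfdrFn (ε τ t : ℝ) : ℝ := fprD ε t / (tprD ε τ t + fprD ε t)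

noncomputable def rhoStar (β : ℝ) : ℝ :=
  if β ≤ 1 / 2 then 0 else if β ≤ 3 / 4 then β - 1 / 2 else (1 - Real.sqrt (1 - β)) ^ 2

noncomputable def qStar (r β : ℝ) : ℝ := if r ≤ β / 3 then 4 * r else (β + r) ^ 2 / (4 * r)

/-- sparsity ε_p = p^{-β} in the ARW model -/
noncomputable def epsP (β : ℝ) (p : ℕ) : ℝ := (p : ℝ) ^ (-β)

/-- strength τ_p = √(2 r log p) in the ARW model -/
noncomputable def tauP (r : ℝ) (p : ℕ) : ℝ := Real.sqrt (2 * r * Real.log p)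

/-- threshold t_p(q) = √(2 q log p) -/
noncomputable def tP (q : ℝ) (p : ℕ) : ℝ := Real.sqrt (2 * q * Real.log p)

/-- folded two-point mixture G_{ε,τ} -/
noncomputable def gMix (ε τ t : ℝ) : ℝ :=
  (1 - ε) * (normCDF t - normCDF (-t)) + ε * (normCDF (t - τ) - normCDF (-t - τ))

/-- ideal HC objective -/
noncomputable def hcObj (ε τ t : ℝ) : ℝ :=
  ((1 - gMix ε τ t) - psiBar 0 t) / Real.sqrt (gMix ε τ t * (1 - gMix ε τ t))

/-- useful feature discovery exponent δ(q) -/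
noncomputable def deltaExp (β r q : ℝ) : ℝ :=
  if q ≤ r then 1 - β else 1 - β - (Real.sqrt q - Real.sqrt r) ^ 2

/-- separation growth exponent γ(q) -/
noncomputable def gammaExp (β r q : ℝ) : ℝ :=
  deltaExp β r q - max (1 - q) (deltaExp β r q) / 2

/-!
The scaled ratio is in fact an exact identity. Since `φ(t ∓ τ) = φ(t) e^{-τ²/2} e^{±tτ}`, one has
`TPR'/FPR' = ε/(1-ε) · e^{-τ²/2} cosh(tτ)`, and in the ARW calibration `τ²/2 = r log p` and
`tτ = 2√(rq) log p`. Hence `2 p^{-γ₀} TPR'/FPR' = (1 + p^{-4√(rq)}) / (1 - p^{-β})` for every `p ≥ 1`,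
and this tends to `1`.
-/

open Real Topology

lemma gaussPDF_pos (t : ℝ) : 0 < gaussPDF t := by
  unfold gaussPDF; positivity

lemma gaussPDF_sub_add_gaussPDF_add (t τ : ℝ) :
    gaussPDF (t - τ) + gaussPDF (t + τ) = 2 * exp (-τ ^ 2 / 2) * cosh (t * τ) * gaussPDF t := by
  simp only [gaussPDF, cosh_eq]
  ring_nf
  simp only [exp_add]
  ring

lemma tprD_div_fprD (ε τ t : ℝ) :
    tprD ε τ t / fprD ε t = ε / (1 - ε) * exp (-τ ^ 2 / 2) * cosh (t * τ) := by
  rw [tprD, fprD, gaussPDF_sub_add_gaussPDF_add]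
  calc ε * (2 * exp (-τ ^ 2 / 2) * cosh (t * τ) * gaussPDF t) / (2 * (1 - ε) * gaussPDF t)
      = ε * (exp (-τ ^ 2 / 2) * cosh (t * τ)) * (2 * gaussPDF t) /
          ((1 - ε) * (2 * gaussPDF t)) := by ring
    _ = _ := by rw [mul_div_mul_right _ _ (mul_ne_zero two_ne_zero (gaussPDF_pos t).ne')]; ring

lemma tauP_sq {r : ℝ} (hr : 0 ≤ r) (p : ℕ) : tauP r p ^ 2 = 2 * r * log p :=
  sq_sqrt (mul_nonneg (mul_nonneg zero_le_two hr) (log_natCast_nonneg p))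

lemma tP_mul_tauP {q : ℝ} (hq : 0 ≤ q) (r : ℝ) (p : ℕ) :
    tP q p * tauP r p = 2 * √(r * q) * log p := by
  have hL := log_natCast_nonneg p
  rw [tP, tauP, ← sqrt_mul (by positivity),
    show 2 * q * log p * (2 * r * log p) = (2 * log p) ^ 2 * (r * q) by ring,
    sqrt_mul (sq_nonneg _), sqrt_sq (by positivity)]
  ring

lemma arw_scaled_tprD_div_fprD_eq {β r q : ℝ} (hr : 0 ≤ r) (hq : 0 ≤ q) {p : ℕ} (hp : 0 < p) :
    2 * (p : ℝ) ^ (-(-β - r + 2 * √(r * q))) *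
        (tprD (epsP β p) (tauP r p) (tP q p) / fprD (epsP β p) (tP q p))
      = (1 + (p : ℝ) ^ (-(4 * √(r * q)))) / (1 - (p : ℝ) ^ (-β)) := by
  rw [tprD_div_fprD, tauP_sq hr, tP_mul_tauP hq, epsP, cosh_eq]
  simp only [rpow_def_of_pos (Nat.cast_pos.mpr hp)]
  set s := √(r * q)
  set L := log p
  have hcancel :
      exp (L * -(-β - r + 2 * s)) * exp (L * -β) * exp (-(2 * r * L) / 2) * exp (2 * s * L) = 1 := by
    rw [← exp_add, ← exp_add, ← exp_add, exp_eq_one_iff]; ring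
  have hdecay :
      exp (L * -(-β - r + 2 * s)) * exp (L * -β) * exp (-(2 * r * L) / 2) * exp (-(2 * s * L))
        = exp (L * -(4 * s)) := by
    rw [← exp_add, ← exp_add, ← exp_add]; congr 1; ring
  linear_combination (hcancel + hdecay) / (1 - exp (L * -β))

lemma tendsto_one_add_rpow_neg_div_one_sub_rpow_neg {a b : ℝ} (ha : 0 < a) (hb : 0 < b) :
    Tendsto (fun x : ℝ => (1 + x ^ (-a)) / (1 - x ^ (-b))) atTop (𝓝 1) := by
  have h := ((tendsto_rpow_neg_atTop ha).const_add 1).div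
    ((tendsto_rpow_neg_atTop hb).const_sub 1) (by norm_num : (1 : ℝ) - 0 ≠ 0)
  rwa [add_zero, sub_zero, div_one] at h

theorem stmt16_general (β r q : ℝ) (hβ1 : 0 < β) (hr1 : 0 < r)
    (hq : 0 < q) :
    Filter.Tendsto
      (fun p : ℕ =>
        2 * (p : ℝ) ^ (-(-β - r + 2 * Real.sqrt (r * q))) *
          (tprD (epsP β p) (tauP r p) (tP q p) / fprD (epsP β p) (tP q p)))
      Filter.atTop (nhds 1) := by
  have hs : 0 < √(r * q) := sqrt_pos.mpr (mul_pos hr1 hq)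
  have hlim := (tendsto_one_add_rpow_neg_div_one_sub_rpow_neg
    (by positivity : 0 < 4 * √(r * q)) hβ1).comp tendsto_natCast_atTop_atTop
  refine hlim.congr' ?_
  filter_upwards [eventually_gt_atTop 0] with p hp
  exact (arw_scaled_tprD_div_fprD_eq hr1.le hq.le hp).symm

/-- Asymptotic tangent of the ROC curve: TPR'/FPR' ∼ (1/2) p^{γ₀}. -/
theorem stmt16 (β r q : ℝ) (hβ1 : 0 < β) (hβ2 : β < 1) (hr1 : 0 < r) (hr2 : r < 1)
    (hq : 0 < q) (hqr : q ≠ r) :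
    Filter.Tendsto
      (fun p : ℕ =>
        2 * (p : ℝ) ^ (-(-β - r + 2 * Real.sqrt (r * q))) *
          (tprD (epsP β p) (tauP r p) (tP q p) / fprD (epsP β p) (tP q p)))
      Filter.atTop (nhds 1) :=
  stmt16_general β r q hβ1 hr1 hq
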